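/- For all positive integers c and r, the Ramanujan sum satisfies ∑_{d ∈ (ℤ/cℤ)^×} e(d·r/c) = ∑_{d | gcd(c, r)} μ(c/d)·d, where the right-hand sum runs over the positive divisors d of gcd(c, r). -/

import Mathlib

/-!
Expanding the coprimality condition by Möbius, `[gcd(k, c) = 1] = ∑_{g ∣ gcd(k, c)} μ(g)`, and
swapping the sums leaves, for each `g ∣ c`, the sum of `e(k r / c)` over the multiples `k = g j`
below `c`, i.e. a complete sum of `e(j r / (c / g))` over `j` mod `c / g`. By orthogonality of
additive characters this is `c / g` if `c / g ∣ r` and `0` otherwise; substituting `d = c / g`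
gives the formula.
-/

open Complex Finset ArithmeticFunction Real
open scoped ArithmeticFunction.Moebius

theorem Nat.divisors_gcd_eq_filter_dvd {n : ℕ} (hn : n ≠ 0) (m : ℕ) :
    (n.gcd m).divisors = {d ∈ n.divisors | d ∣ m} := by
  rw [← Nat.divisors_filter_dvd_of_dvd hn (Nat.gcd_dvd_left n m)]
  exact filter_congr fun d hd => by
    rw [Nat.dvd_gcd_iff, and_iff_right (Nat.dvd_of_mem_divisors hd)]

theorem ZMod.sum_val_eq_sum_range {M : Type*} [AddCommMonoid M] (n : ℕ) [NeZero n] (f : ℕ → M) :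
    ∑ x : ZMod n, f x.val = ∑ k ∈ range n, f k :=
  sum_nbij' ZMod.val Nat.cast (fun x _ => mem_range.mpr x.val_lt) (fun _ _ => mem_univ _)
    (fun x _ => ZMod.natCast_zmod_val x) (fun _ hk => ZMod.val_natCast_of_lt (mem_range.mp hk))
    (fun _ _ => rfl)

theorem ZMod.sum_units_val_eq_sum_coprime {M : Type*} [AddCommMonoid M] (n : ℕ) [NeZero n]
    (f : ℕ → M) :
    ∑ u : (ZMod n)ˣ, f (u : ZMod n).val = ∑ k ∈ range n with k.Coprime n, f k := by
  refine sum_nbij' (fun u => (u : ZMod n).val)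
    (fun k => if h : k.Coprime n then ZMod.unitOfCoprime k h else 1) ?_ ?_ ?_ ?_ ?_
  · intro u _
    simpa using ⟨ZMod.val_lt _, ZMod.val_coe_unit_coprime u⟩
  · simp
  · intro u _
    ext
    rw [dif_pos (ZMod.val_coe_unit_coprime u), ZMod.coe_unitOfCoprime, ZMod.natCast_zmod_val]
  · intro k hk
    obtain ⟨hkn, hcop⟩ := mem_filter.mp hk
    rw [dif_pos hcop, ZMod.coe_unitOfCoprime]
    exact ZMod.val_natCast_of_lt (mem_range.mp hkn)
  · simp

theorem ite_coprime_eq_sum_moebius {R : Type*} [Ring R] {n : ℕ} (hn : n ≠ 0) (k : ℕ) :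
    (if k.Coprime n then 1 else 0 : R) = ∑ g ∈ n.divisors with g ∣ k, (μ g : R) := by
  have h := congr_arg (· (n.gcd k)) (coe_moebius_mul_coe_zeta (R := R))
  simp only [coe_mul_zeta_apply, intCoe_apply, one_apply] at h
  rw [← Nat.divisors_gcd_eq_filter_dvd hn, h, Nat.gcd_comm]

theorem sum_range_filter_dvd {M : Type*} [AddCommMonoid M] {g n : ℕ} (hg : g ∣ n) (f : ℕ → M) :
    ∑ k ∈ range n with g ∣ k, f k = ∑ j ∈ range (n / g), f (g * j) := by
  rcases Nat.eq_zero_or_pos g with rfl | hg0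
  · simp [zero_dvd_iff.mp hg]
  symm
  refine sum_nbij' (g * ·) (· / g) ?_ ?_ ?_ ?_ (fun _ _ => rfl)
  · intro j hj
    simp only [mem_filter, mem_range, dvd_mul_right, and_true] at hj ⊢
    exact (Nat.lt_div_iff_mul_lt' hg j).mp hj
  · intro k hk
    simp only [mem_filter, mem_range] at hk ⊢
    exact Nat.div_lt_div_of_lt_of_dvd hg hk.1
  · intro j _
    exact Nat.mul_div_cancel_left j hg0
  · intro k hk
    exact Nat.mul_div_cancel' (mem_filter.mp hk).2

theorem sum_range_exp_mul_div (n a : ℕ) [NeZero n] :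
    ∑ k ∈ range n, exp (2 * π * I * (k * a / n)) = if n ∣ a then (n : ℂ) else 0 := by
  have h (k : ℕ) :
      exp (2 * π * I * (k * a / n)) = ZMod.stdAddChar ((k : ZMod n) * (a : ZMod n)) := by
    rw [show (k : ZMod n) * (a : ZMod n) = ((k * a : ℕ) : ℤ) by push_cast; rfl,
      ZMod.stdAddChar_coe]
    push_cast
    ring_nf
  simp_rw [h]
  rw [← ZMod.sum_val_eq_sum_range]
  simp only [ZMod.natCast_zmod_val]
  rw [AddChar.sum_mulShift _ (ZMod.isPrimitive_stdAddChar n)]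
  simp [ZMod.natCast_eq_zero_iff, ZMod.card]

theorem sum_range_filter_dvd_exp_mul_div {g n : ℕ} [NeZero n] (hg : g ∣ n) (a : ℕ) :
    ∑ k ∈ range n with g ∣ k, exp (2 * π * I * (k * a / n)) =
      if n / g ∣ a then ((n / g : ℕ) : ℂ) else 0 := by
  have hg0 : g ≠ 0 := by rintro rfl; exact NeZero.ne n (zero_dvd_iff.mp hg)
  have : NeZero (n / g) := ⟨Nat.div_ne_zero_iff_of_dvd hg |>.mpr ⟨NeZero.ne n, hg0⟩⟩
  have hgC : (g : ℂ) ≠ 0 := Nat.cast_ne_zero.mpr hg0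
  have hnC : (n : ℂ) ≠ 0 := Nat.cast_ne_zero.mpr (NeZero.ne n)
  rw [sum_range_filter_dvd hg, ← sum_range_exp_mul_div]
  refine sum_congr rfl fun j _ => ?_
  rw [Nat.cast_div hg hgC, Nat.cast_mul]
  congr 1
  field_simp

theorem sum_coprime_exp_mul_div_eq_sum_moebius (n r : ℕ) [NeZero n] :
    ∑ k ∈ range n with k.Coprime n, exp (2 * π * I * (k * r / n)) =
      ∑ d ∈ (n.gcd r).divisors, (μ (n / d) : ℂ) * d := by
  set e : ℕ → ℂ := fun k => exp (2 * π * I * (k * r / n))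
  calc ∑ k ∈ range n with k.Coprime n, e k
      = ∑ k ∈ range n, ∑ g ∈ n.divisors with g ∣ k, (μ g : ℂ) * e k := by
        rw [sum_filter]
        refine sum_congr rfl fun k _ => ?_
        rw [← sum_mul, ← ite_coprime_eq_sum_moebius (NeZero.ne n), ite_mul, one_mul, zero_mul]
    _ = ∑ g ∈ n.divisors, (μ g : ℂ) * ∑ k ∈ range n with g ∣ k, e k := by
        simp_rw [mul_sum]
        exact sum_comm' fun _ _ => by simp only [mem_filter, mem_range]; tauto
    _ = ∑ g ∈ n.divisors, (μ g : ℂ) * if n / g ∣ r then ((n / g : ℕ) : ℂ) else 0 :=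
        sum_congr rfl fun g hg => by
          rw [sum_range_filter_dvd_exp_mul_div (Nat.dvd_of_mem_divisors hg)]
    _ = ∑ d ∈ n.divisors, (μ (n / d) : ℂ) * if d ∣ r then (d : ℂ) else 0 := by
        rw [← Nat.sum_div_divisors]
        exact sum_congr rfl fun d hd => by
          rw [Nat.div_div_self (Nat.dvd_of_mem_divisors hd) (NeZero.ne n)]
    _ = ∑ d ∈ (n.gcd r).divisors, (μ (n / d) : ℂ) * d := by
        rw [Nat.divisors_gcd_eq_filter_dvd (NeZero.ne n), sum_filter]
        simp_rw [mul_ite, mul_zero]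

theorem stmt6_general (c r : ℕ) [NeZero c] :
    ∑ d : (ZMod c)ˣ,
        Complex.exp (2 * Real.pi * Complex.I * ((((d : ZMod c).val : ℝ) * r / c : ℝ) : ℂ)) =
      ∑ d ∈ (Nat.gcd c r).divisors,
        ((ArithmeticFunction.moebius (c / d) : ℤ) : ℂ) * (d : ℂ) := by
  rw [ZMod.sum_units_val_eq_sum_coprime c fun k => exp (2 * π * I * (((k : ℝ) * r / c : ℝ) : ℂ))]
  push_cast
  exact sum_coprime_exp_mul_div_eq_sum_moebius c r

/-- Ramanujan sum identity: ∑_{d ∈ (ℤ/cℤ)^×} e(d·r/c) = ∑_{d | gcd(c,r)} μ(c/d)·d. -/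
theorem stmt6 (c r : ℕ) [NeZero c] (hc : 0 < c) (hr : 0 < r) :
    ∑ d : (ZMod c)ˣ,
        Complex.exp (2 * Real.pi * Complex.I * ((((d : ZMod c).val : ℝ) * r / c : ℝ) : ℂ)) =
      ∑ d ∈ (Nat.gcd c r).divisors,
        ((ArithmeticFunction.moebius (c / d) : ℤ) : ℂ) * (d : ℂ) :=
  stmt6_general c r
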